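/- For the EI ODE system with constant rates, the total population E(u) + I(u) grows (resp. decays) exponentially with rate equal to the dominant eigenvalue λ₊ = (−(γ+ν) + B)/2, and λ₊ > 0 if and only if α > ν (i.e., R = α/ν > 1). -/

import Mathlib

/- The total population E(u) + I(u) grows (resp. decays) exponentially with rate
   λ₊ = (−(γ+ν)+B)/2: for nonnegative, not-both-zero initial conditions,
   e^{−λ₊u}(E(u)+I(u)) → c > 0 as u → ∞; and λ₊ > 0 ↔ α > ν. -/

lemma lin_ode_aux (k : ℝ) (f : ℝ → ℝ) (hf : ∀ u, HasDerivAt f (k * f u) u) (u : ℝ) :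
    f u = f 0 * Real.exp (k * u) := by
  have h : ∀ x : ℝ, HasDerivAt (fun y => f y * Real.exp (-(k * y))) 0 x := by
    intro x
    have h1 : HasDerivAt (fun y : ℝ => -(k * y)) (-k) x := by
      have h0 := ((hasDerivAt_id x).const_mul k).neg
      rw [mul_one] at h0
      exact h0
    have he := h1.exp
    have := (hf x).mul he
    have e0 : k * f x * Real.exp (-(k * x)) + f x * (Real.exp (-(k * x)) * -k) = 0 := by ring
    rw [e0] at this
    exact this
  have hconst : f u * Real.exp (-(k * u)) = f 0 * Real.exp (-(k * 0)) :=
    is_const_of_deriv_eq_zero (fun y => (h y).differentiableAt) (fun y => (h y).deriv) u 0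
  have hx : f u * Real.exp (-(k * u)) = f 0 := by simpa using hconst
  calc f u = f u * (Real.exp (-(k * u)) * Real.exp (k * u)) := by
        rw [← Real.exp_add]; simp
    _ = (f u * Real.exp (-(k * u))) * Real.exp (k * u) := by ring
    _ = f 0 * Real.exp (k * u) := by rw [hx]

theorem EI_growth_rate (α γ ν : ℝ) (hα : 0 < α) (hγ : 0 < γ) (hν : 0 < ν) :
    let B : ℝ := Real.sqrt (4 * α * γ + (γ - ν) ^ 2)
    let lamPlus : ℝ := (-(γ + ν) + B) / 2
    (∀ E I : ℝ → ℝ,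
      (∀ u, HasDerivAt E (α * I u - γ * E u) u) →
      (∀ u, HasDerivAt I (γ * E u - ν * I u) u) →
      0 ≤ E 0 → 0 ≤ I 0 → 0 < E 0 + I 0 →
      ∃ c : ℝ, 0 < c ∧
        Filter.Tendsto (fun u => Real.exp (-(lamPlus * u)) * (E u + I u))
          Filter.atTop (nhds c)) ∧
    (0 < lamPlus ↔ ν < α) := by
  intro B lamPlus
  have hB_def : B = Real.sqrt (4 * α * γ + (γ - ν) ^ 2) := rfl
  have hlam_def : lamPlus = (-(γ + ν) + B) / 2 := rfl
  have hBsq : B ^ 2 = 4 * α * γ + (γ - ν) ^ 2 := by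
    rw [hB_def]; exact Real.sq_sqrt (by positivity)
  have hBnn : 0 ≤ B := by rw [hB_def]; exact Real.sqrt_nonneg _
  have hγ0 : (γ : ℝ) ≠ 0 := ne_of_gt hγ
  have hαγ : 0 < α * γ := mul_pos hα hγ
  have hB1 : ν - γ < B := by nlinarith
  have hB2 : γ - ν < B := by nlinarith
  have hBpos : 0 < B := by nlinarith
  have hBne : B ≠ 0 := ne_of_gt hBpos
  constructor
  · intro E I hE hI hE0 hI0 hpos
    set lm : ℝ := (-(γ + ν) - B) / 2 with hlm
    set bp : ℝ := (lamPlus + γ) / γ with hbp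
    set bm : ℝ := (lm + γ) / γ with hbm
    have hbp_pos : 0 < bp := by
      have h1 : 0 < lamPlus + γ := by rw [hlam_def]; linarith
      rw [hbp]; exact div_pos h1 hγ
    have hbm_neg : bm < 0 := by
      have h1 : lm + γ < 0 := by rw [hlm]; linarith
      rw [hbm]; exact div_neg_of_neg_of_pos h1 hγ
    have hcharp : lamPlus ^ 2 + (γ + ν) * lamPlus + (γ * ν - α * γ) = 0 := by
      rw [hlam_def]; linear_combination hBsq / 4
    have hcharm : lm ^ 2 + (γ + ν) * lm + (γ * ν - α * γ) = 0 := by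
      rw [hlm]; linear_combination hBsq / 4
    have hf : ∀ u, HasDerivAt (fun u => E u + bp * I u) (lamPlus * (E u + bp * I u)) u := by
      intro u
      have h1 := (hE u).add ((hI u).const_mul bp)
      have h2 : α * I u - γ * E u + bp * (γ * E u - ν * I u)
          = lamPlus * (E u + bp * I u) := by
        rw [hbp]
        field_simp
        linear_combination (I u) * hcharp - (I u) / 2 * hBsq
      exact h2 ▸ h1
    have hg : ∀ u, HasDerivAt (fun u => E u + bm * I u) (lm * (E u + bm * I u)) u := by
      intro u
      have h1 := (hE u).add ((hI u).const_mul bm)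
      have h2 : α * I u - γ * E u + bm * (γ * E u - ν * I u)
          = lm * (E u + bm * I u) := by
        rw [hbm]
        field_simp
        linear_combination (I u) * hcharm - (I u) / 2 * hBsq
      exact h2 ▸ h1
    have hfs : ∀ u, E u + bp * I u = (E 0 + bp * I 0) * Real.exp (lamPlus * u) :=
      fun u => lin_ode_aux lamPlus _ hf u
    have hgs : ∀ u, E u + bm * I u = (E 0 + bm * I 0) * Real.exp (lm * u) :=
      fun u => lin_ode_aux lm _ hg u
    have hf0 : 0 < E 0 + bp * I 0 := by
      rcases hI0.lt_or_eq with h | h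
      · nlinarith
      · rw [← h]
        have : 0 < E 0 := by rw [← h] at hpos; linarith
        linarith
    have hp_pos : 0 < (1 - bm) * γ / B := by
      apply div_pos _ hBpos
      apply mul_pos _ hγ
      linarith
    refine ⟨((1 - bm) * γ / B) * (E 0 + bp * I 0), mul_pos hp_pos hf0, ?_⟩
    have key : ∀ u, Real.exp (-(lamPlus * u)) * (E u + I u)
        = ((1 - bm) * γ / B) * (E 0 + bp * I 0)
          + (((bp - 1) * γ / B) * (E 0 + bm * I 0)) * Real.exp (-(B * u)) := by
      intro u
      have hEI : E u + I u = ((1 - bm) * γ / B) * (E u + bp * I u)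
          + ((bp - 1) * γ / B) * (E u + bm * I u) := by
        rw [hbp, hbm, hlm, hlam_def]
        field_simp
        ring
      rw [hEI, hfs u, hgs u]
      have hexp1 : Real.exp (-(lamPlus * u)) * Real.exp (lamPlus * u) = 1 := by
        rw [← Real.exp_add]; simp
      have hexp2 : Real.exp (-(lamPlus * u)) * Real.exp (lm * u) = Real.exp (-(B * u)) := by
        rw [← Real.exp_add]
        congr 1
        rw [hlm, hlam_def]; ring
      linear_combination (((1 - bm) * γ / B) * (E 0 + bp * I 0)) * hexp1
        + (((bp - 1) * γ / B) * (E 0 + bm * I 0)) * hexp2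
    apply Filter.Tendsto.congr (fun u => (key u).symm)
    have hexp : Filter.Tendsto (fun u : ℝ => Real.exp (-(B * u))) Filter.atTop (nhds 0) := by
      have h1 : Filter.Tendsto (fun u : ℝ => B * u) Filter.atTop Filter.atTop :=
        Filter.Tendsto.const_mul_atTop hBpos Filter.tendsto_id
      exact Real.tendsto_exp_neg_atTop_nhds_zero.comp h1
    have h2 := (hexp.const_mul (((bp - 1) * γ / B) * (E 0 + bm * I 0))).const_add
      (((1 - bm) * γ / B) * (E 0 + bp * I 0))
    simpa using h2
  · rw [hlam_def]
    constructor
    · intro h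
      have h1 : 0 < B - (γ + ν) := by linarith
      have h2 : 0 < B + (γ + ν) := by linarith
      nlinarith [mul_pos h1 h2]
    · intro h
      nlinarith [mul_pos hγ (sub_pos.mpr h)]
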